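/- Let X be a finite metric space and q ≥ 1, with a fixed degree-q lune function L^q. Then there exists a family of isomorphisms θ_r^q : H_q(RVR_r^q(X)) → H_q(VR_r(X)) such that for all 0 ≤ r₁ < r₂ the square with top map induced by the inclusion RVR_{r₁}^q(X) ⊆ RVR_{r₂}^q(X), bottom map induced by the inclusion VR_{r₁}(X) ⊆ VR_{r₂}(X), and vertical maps θ_{r₁}^q, θ_{r₂}^q, commutes. -/
import Mathlib


set_option maxSynthPendingDepth 2
set_option linter.unusedSectionVars false

/-! Simplicial ℤ/2 chains and homology machinery. -/

/-- Chains with `ℤ/2` coefficients, formal sums of finite subsets of `V`. -/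
abbrev Ch (V : Type*) := Finset V →₀ ZMod 2

/-- The simplicial boundary operator: a simplex with at least two vertices is sent
to the sum of its codimension-1 faces; vertices are sent to `0`. -/
noncomputable def bdry (V : Type*) [DecidableEq V] : Ch V →ₗ[ZMod 2] Ch V :=
  Finsupp.linearCombination (ZMod 2) fun σ : Finset V =>
    if σ.card ≤ 1 then 0 else ∑ v ∈ σ, Finsupp.single (σ.erase v) (1 : ZMod 2)

/-- A simplicial complex: a collection of nonempty finite subsets of `V`
closed under taking nonempty subsets. -/
def IsComplex {V : Type*} (K : Set (Finset V)) : Prop :=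
  ∀ σ ∈ K, σ.Nonempty ∧ ∀ τ ⊆ σ, τ.Nonempty → τ ∈ K

/-- The space of chains supported on simplices of `K` with `k` vertices
(i.e. the simplicial chain group of degree `k - 1`). -/
noncomputable def chainCard {V : Type*} [DecidableEq V] (K : Set (Finset V)) (k : ℕ) :
    Submodule (ZMod 2) (Ch V) :=
  Submodule.span (ZMod 2) {f | ∃ σ ∈ K, σ.card = k ∧ f = Finsupp.single σ 1}

theorem chainCard_mono {V : Type*} [DecidableEq V] {K₁ K₂ : Set (Finset V)}
    (h : K₁ ⊆ K₂) (k : ℕ) : chainCard K₁ k ≤ chainCard K₂ k := by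
  apply Submodule.span_mono
  rintro f ⟨σ, hσ, hc, rfl⟩
  exact ⟨σ, h hσ, hc, rfl⟩

/-- Cycles (in cardinality grading `k`, i.e. degree `k-1`) of a chain subcomplex `W`. -/
noncomputable def cyclesOf {V : Type*} [DecidableEq V] (W : ℕ → Submodule (ZMod 2) (Ch V)) (k : ℕ) :
    Submodule (ZMod 2) (Ch V) :=
  W k ⊓ LinearMap.ker (bdry V)

/-- Boundaries (in cardinality grading `k`, i.e. degree `k-1`) of a chain subcomplex `W`. -/
noncomputable def bdriesOf {V : Type*} [DecidableEq V] (W : ℕ → Submodule (ZMod 2) (Ch V)) (k : ℕ) :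
    Submodule (ZMod 2) (Ch V) :=
  Submodule.map (bdry V) (W (k + 1))

/-- Homology of the chain complex `W` in cardinality grading `k` (degree `k - 1`):
cycles modulo boundaries. -/
abbrev homolOf {V : Type*} [DecidableEq V] (W : ℕ → Submodule (ZMod 2) (Ch V)) (k : ℕ) :=
  ↥(cyclesOf W k) ⧸ (bdriesOf W k).comap (cyclesOf W k).subtype

/-- The map on homology induced by a degreewise inclusion of chain complexes. -/
noncomputable def homolMap {V : Type*} [DecidableEq V]
    (W W' : ℕ → Submodule (ZMod 2) (Ch V)) (h : ∀ k, W k ≤ W' k) (k : ℕ) :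
    homolOf W k →ₗ[ZMod 2] homolOf W' k :=
  Submodule.mapQ _ _ (Submodule.inclusion (inf_le_inf (h k) le_rfl))
    (by
      intro x hx
      simp only [Submodule.mem_comap, Submodule.subtype_apply, Submodule.coe_inclusion]
        at hx ⊢
      exact Submodule.map_mono (h (k + 1)) hx)

/-- The diameter of a simplex (finite subset of a metric space). -/
noncomputable def sdiam {X : Type*} [MetricSpace X] (σ : Finset X) : ℝ :=
  Metric.diam (σ : Set X)

/-- The increasingly sorted list of labels of the vertices of a simplex. -/
def labelList {X : Type*} [DecidableEq X] (ψ : X → ℕ) (σ : Finset X) : List ℕ :=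
  (σ.image ψ).sort (· ≤ ·)

/-- The length-lexicographic order on simplices: compare first by diameter,
then by dimension (cardinality), then lexicographically on the sorted label lists. -/
def sLT {X : Type*} [MetricSpace X] [DecidableEq X] (ψ : X → ℕ) (σ τ : Finset X) : Prop :=
  sdiam σ < sdiam τ ∨
    (sdiam σ = sdiam τ ∧
      (σ.card < τ.card ∨
        (σ.card = τ.card ∧ List.Lex (· < ·) (labelList ψ σ) (labelList ψ τ))))

/-! Lunes, lune functions and (reduced) Vietoris–Rips complexes. -/

/-- The lune of a simplex `σ`: the points `x` such that replacing any vertex of `σ`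
by `x` yields a simplex that comes strictly earlier in the filtration order. -/
def lune {X : Type*} [MetricSpace X] [DecidableEq X] (ψ : X → ℕ) (σ : Finset X) :
    Set X :=
  {x | ∀ y ∈ σ, sLT ψ (insert x (σ.erase y)) σ}

/-- Two points of the lune of `σ` are adjacent when every simplex obtained from `σ` by
replacing two distinct vertices by the two points comes earlier than `σ`. -/
def luneAdj {X : Type*} [MetricSpace X] [DecidableEq X] (ψ : X → ℕ) (σ : Finset X)
    (p q : X) : Prop :=
  p ∈ lune ψ σ ∧ q ∈ lune ψ σ ∧ p ≠ q ∧
    ∀ y ∈ σ, ∀ z ∈ σ, y ≠ z → sLT ψ (insert p (insert q ((σ.erase y).erase z))) σ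

/-- Two points are in the same connected component of the lune of `σ`. -/
def luneConn {X : Type*} [MetricSpace X] [DecidableEq X] (ψ : X → ℕ) (σ : Finset X) :
    X → X → Prop :=
  Relation.ReflTransGen (luneAdj ψ σ)

/-- `L` is a degree-`q` lune function: to every `q`-simplex it assigns a set consisting of
exactly one point of each connected component of its lune, namely the point of that
component whose vertex appears earliest in the filtration (smallest label). -/
def IsLuneFun {X : Type*} [MetricSpace X] [DecidableEq X] (ψ : X → ℕ) (q : ℕ)
    (L : Finset X → Set X) : Prop :=
  ∀ σ : Finset X, σ.card = q + 1 →
    L σ ⊆ lune ψ σ ∧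
    (∀ x ∈ lune ψ σ, ∃! y, y ∈ L σ ∧ luneConn ψ σ x y) ∧
    (∀ y ∈ L σ, ∀ z ∈ lune ψ σ, luneConn ψ σ y z → ψ y ≤ ψ z)

/-- The Vietoris–Rips complex of `X` at scale `r`. -/
noncomputable def VRc (X : Type*) [MetricSpace X] (r : ℝ) : Set (Finset X) :=
  {σ | σ.Nonempty ∧ sdiam σ ≤ r}

theorem VRc_mono (X : Type*) [MetricSpace X] {r₁ r₂ : ℝ} (h : r₁ ≤ r₂) :
    VRc X r₁ ⊆ VRc X r₂ := by
  rintro σ ⟨h1, h2⟩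
  exact ⟨h1, h2.trans h⟩

/-- The degree-`q` reduced Vietoris–Rips complex at scale `r`: all simplices of `VR_r(X)`
of dimension at most `q`, together with the `(q+1)`-simplices `⟨σ x⟩` for `q`-simplices
`σ ∈ VR_r(X)` and `x ∈ L σ`, of diameter at most `r`. -/
noncomputable def RVRc {X : Type*} [MetricSpace X] [DecidableEq X] (q : ℕ)
    (L : Finset X → Set X) (r : ℝ) : Set (Finset X) :=
  {σ | σ.Nonempty ∧ σ.card ≤ q + 1 ∧ sdiam σ ≤ r} ∪
    {τ | ∃ σ : Finset X, ∃ x ∈ L σ, σ.card = q + 1 ∧ sdiam σ ≤ r ∧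
      τ = insert x σ ∧ τ.card = q + 2 ∧ sdiam τ ≤ r}

theorem RVRc_mono {X : Type*} [MetricSpace X] [DecidableEq X] (q : ℕ)
    (L : Finset X → Set X) {r₁ r₂ : ℝ} (h : r₁ ≤ r₂) :
    RVRc q L r₁ ⊆ RVRc q L r₂ := by
  rintro τ (⟨h1, h2, h3⟩ | ⟨σ, x, hx, h1, h2, h3, h4, h5⟩)
  · exact Or.inl ⟨h1, h2, h3.trans h⟩
  · exact Or.inr ⟨σ, x, hx, h1, h2.trans h, h3, h4, h5.trans h⟩

/-! ### Auxiliary development -/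

section Aux

variable {X : Type*} [MetricSpace X] [DecidableEq X]

/-- Lexicographic key of a simplex. -/
noncomputable def skey (ψ : X → ℕ) (σ : Finset X) : ℝ ×ₗ (ℕ ×ₗ List ℕ) :=
  toLex (sdiam σ, toLex (σ.card, labelList ψ σ))

theorem sLT_iff_skey (ψ : X → ℕ) (σ τ : Finset X) :
    sLT ψ σ τ ↔ skey ψ σ < skey ψ τ := by
  show _ ↔ toLex (_, _) < toLex (_, _)
  rw [Prod.Lex.lt_iff, Prod.Lex.lt_iff]
  exact Iff.rfl

theorem labelList_injective {ψ : X → ℕ} (hinj : Function.Injective ψ) :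
    Function.Injective (labelList ψ) := by
  intro a b h
  have h2 : a.image ψ = b.image ψ := by
    have := congrArg List.toFinset h
    simpa [labelList, Finset.sort_toFinset] using this
  exact Finset.image_injective hinj h2

theorem skey_injective {ψ : X → ℕ} (hinj : Function.Injective ψ) :
    Function.Injective (skey ψ) := by
  intro a b h
  exact labelList_injective hinj
    (congrArg (fun p : ℝ ×ₗ (ℕ ×ₗ List ℕ) => (ofLex (ofLex p).2).2) h)

theorem sLT_wf [Fintype X] (ψ : X → ℕ) : WellFounded (sLT ψ) := by
  have ht : IsTrans (Finset X) (sLT ψ) :=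
    ⟨fun a b c h1 h2 => (sLT_iff_skey ψ a c).2
      (lt_trans ((sLT_iff_skey ψ a b).1 h1) ((sLT_iff_skey ψ b c).1 h2))⟩
  have hi : IsIrrefl (Finset X) (sLT ψ) :=
    ⟨fun a h => lt_irrefl _ ((sLT_iff_skey ψ a a).1 h)⟩
  exact Finite.wellFounded_of_trans_of_irrefl _

theorem sLT_of_le_of_ne {ψ : X → ℕ} (hinj : Function.Injective ψ) {σ τ : Finset X}
    (hle : skey ψ σ ≤ skey ψ τ) (hne : σ ≠ τ) : sLT ψ σ τ :=
  (sLT_iff_skey ψ σ τ).2 (lt_of_le_of_ne hle fun h => hne (skey_injective hinj h))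

theorem sdiam_le_of_sLT {ψ : X → ℕ} {σ τ : Finset X} (h : sLT ψ σ τ) :
    sdiam σ ≤ sdiam τ := by
  rcases h with h | ⟨h, -⟩
  · exact le_of_lt h
  · exact le_of_eq h

theorem sdiam_mono {s t : Finset X} (h : s ⊆ t) : sdiam s ≤ sdiam t :=
  Metric.diam_mono (Finset.coe_subset.2 h) t.finite_toSet.isBounded

theorem dist_le_sdiam {s : Finset X} {a b : X} (ha : a ∈ s) (hb : b ∈ s) :
    dist a b ≤ sdiam s :=
  Metric.dist_le_diam_of_mem s.finite_toSet.isBounded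
    (Finset.mem_coe.2 ha) (Finset.mem_coe.2 hb)

theorem lune_notMem {ψ : X → ℕ} {σ : Finset X} {x : X} (hx : x ∈ lune ψ σ) : x ∉ σ := by
  intro hmem
  have h := hx x hmem
  rw [Finset.insert_erase hmem] at h
  exact lt_irrefl _ ((sLT_iff_skey ψ σ σ).1 h)

theorem sdiam_insert_le {ψ : X → ℕ} {σ : Finset X} {y : X} (hcard : 2 ≤ σ.card)
    (h : ∀ z ∈ σ, sLT ψ (insert y (σ.erase z)) σ) :
    sdiam (insert y σ) ≤ sdiam σ := by
  apply Metric.diam_le_of_forall_dist_le Metric.diam_nonneg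
  intro a ha b hb
  simp only [Finset.coe_insert, Set.mem_insert_iff, Finset.mem_coe] at ha hb
  have key : ∀ b ∈ σ, dist y b ≤ sdiam σ := by
    intro b hbσ
    obtain ⟨z, hz, hzb⟩ := Finset.exists_mem_ne (s := σ) (by omega) b
    have hface := sdiam_le_of_sLT (h z hz)
    have hd : dist y b ≤ sdiam (insert y (σ.erase z)) :=
      dist_le_sdiam (Finset.mem_insert_self _ _)
        (Finset.mem_insert_of_mem (Finset.mem_erase.2 ⟨Ne.symm hzb, hbσ⟩))
    exact hd.trans hface
  rcases ha with rfl | ha <;> rcases hb with rfl | hb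
  · simpa using Metric.diam_nonneg (s := (σ : Set X))
  · exact key b hb
  · rw [dist_comm]; exact key a ha
  · exact dist_le_sdiam ha hb

/-! ### Boundary computations -/

theorem bdry_single_of_card_le {σ : Finset X} (h : σ.card ≤ 1) :
    bdry X (Finsupp.single σ (1 : ZMod 2)) = 0 := by
  unfold bdry
  rw [Finsupp.linearCombination_single, if_pos h, smul_zero]

theorem bdry_single {σ : Finset X} (h : 2 ≤ σ.card) :
    bdry X (Finsupp.single σ (1 : ZMod 2)) =
      ∑ v ∈ σ, Finsupp.single (σ.erase v) (1 : ZMod 2) := by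
  unfold bdry
  rw [Finsupp.linearCombination_single, if_neg (by omega), one_smul]

theorem ch_add_self (v : Ch X) : v + v = 0 := by
  rw [← two_smul (ZMod 2) v, show (2 : ZMod 2) = 0 from rfl, zero_smul]

theorem ch_neg_eq (v : Ch X) : -v = v :=
  neg_eq_of_add_eq_zero_left (ch_add_self v)

theorem bdry_bdry (f : Ch X) : bdry X (bdry X f) = 0 := by
  have hcomp : (bdry X).comp (bdry X) = 0 := by
    apply Finsupp.lhom_ext
    intro σ b
    have h1 : bdry X (bdry X (Finsupp.single σ (1 : ZMod 2))) = 0 := by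
      by_cases hc : σ.card ≤ 1
      · rw [bdry_single_of_card_le hc, map_zero]
      · push_neg at hc
        rw [bdry_single hc, map_sum]
        by_cases hc2 : σ.card = 2
        · apply Finset.sum_eq_zero
          intro v hv
          exact bdry_single_of_card_le (by rw [Finset.card_erase_of_mem hv]; omega)
        · have hrw : ∀ v ∈ σ, bdry X (Finsupp.single (σ.erase v) (1 : ZMod 2)) =
              ∑ w ∈ σ.erase v, Finsupp.single ((σ.erase v).erase w) (1 : ZMod 2) :=
            fun v hv => bdry_single (by rw [Finset.card_erase_of_mem hv]; omega)
          rw [Finset.sum_congr rfl hrw, Finset.sum_sigma']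
          refine Finset.sum_involution (fun p _ => ⟨p.2, p.1⟩) ?_ ?_ ?_ ?_
          · rintro ⟨v, w⟩ hp
            dsimp only
            rw [Finset.erase_right_comm]
            exact ch_add_self _
          · rintro ⟨v, w⟩ hp -
            simp only [Finset.mem_sigma, Finset.mem_erase] at hp
            intro hcontra
            exact hp.2.1 (congrArg Sigma.fst hcontra)
          · rintro ⟨v, w⟩ hp
            simp only [Finset.mem_sigma, Finset.mem_erase] at hp ⊢
            exact ⟨hp.2.2, Ne.symm hp.2.1, hp.1⟩
          · rintro ⟨v, w⟩ hp
            rfl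
    have hb : Finsupp.single σ b = b • Finsupp.single σ (1 : ZMod 2) := by
      rw [Finsupp.smul_single, smul_eq_mul, mul_one]
    simp only [LinearMap.comp_apply, LinearMap.zero_apply, hb, map_smul, h1, smul_zero]
  exact LinearMap.congr_fun hcomp f

theorem bdry_insert_insert {p c : X} {σ : Finset X} (hp : p ∉ σ) (hc : c ∉ σ)
    (hpc : p ≠ c) :
    bdry X (Finsupp.single (insert p (insert c σ)) (1 : ZMod 2)) =
      Finsupp.single (insert c σ) (1 : ZMod 2) + Finsupp.single (insert p σ) (1 : ZMod 2)
        + ∑ z ∈ σ, Finsupp.single (insert p (insert c (σ.erase z))) (1 : ZMod 2) := by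
  have hpcs : p ∉ insert c σ := by simp [hpc, hp]
  have hcard : 2 ≤ (insert p (insert c σ)).card := by
    rw [Finset.card_insert_of_notMem hpcs, Finset.card_insert_of_notMem hc]
    omega
  rw [bdry_single hcard, Finset.sum_insert hpcs, Finset.sum_insert hc]
  have e1 : (insert p (insert c σ)).erase p = insert c σ := Finset.erase_insert hpcs
  have e2 : (insert p (insert c σ)).erase c = insert p σ := by
    rw [Finset.erase_insert_of_ne hpc, Finset.erase_insert hc]
  have e3 : ∀ z ∈ σ, Finsupp.single ((insert p (insert c σ)).erase z) (1 : ZMod 2)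
      = Finsupp.single (insert p (insert c (σ.erase z))) (1 : ZMod 2) := by
    intro z hz
    congr 1
    rw [Finset.erase_insert_of_ne (fun h : p = z => hp (by rw [h]; exact hz)),
      Finset.erase_insert_of_ne (fun h : c = z => hc (by rw [h]; exact hz))]
  rw [e1, e2, Finset.sum_congr rfl e3]
  abel

end Aux

section Aux2

variable {X : Type*} [MetricSpace X] [DecidableEq X]

/-- Every nonempty simplex `τ` decomposes as `insert x σ` where `σ` is its maximal
facet and `x` the remaining vertex; then `x ∈ lune σ` and all facets are `≤ σ`. -/
theorem exists_maxface {ψ : X → ℕ} (hinj : Function.Injective ψ) (τ : Finset X)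
    (hne : τ.Nonempty) :
    ∃ x σ, x ∉ σ ∧ τ = insert x σ ∧ σ = τ.erase x ∧ x ∈ lune ψ σ ∧
      ∀ v ∈ τ, v ≠ x → sLT ψ (τ.erase v) σ := by
  obtain ⟨v₀, hv₀, hmax⟩ := Finset.exists_max_image τ (fun v => skey ψ (τ.erase v)) hne
  have hfaces : ∀ v ∈ τ, v ≠ v₀ → sLT ψ (τ.erase v) (τ.erase v₀) := by
    intro v hv hvne
    apply sLT_of_le_of_ne hinj (hmax v hv)
    intro hcontra
    have h1 : v₀ ∈ τ.erase v := Finset.mem_erase.2 ⟨Ne.symm hvne, hv₀⟩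
    rw [hcontra] at h1
    exact Finset.notMem_erase _ _ h1
  refine ⟨v₀, τ.erase v₀, Finset.notMem_erase _ _, (Finset.insert_erase hv₀).symm, rfl,
    ?_, hfaces⟩
  intro y hy
  have hyτ : y ∈ τ := Finset.mem_of_mem_erase hy
  have hyne : y ≠ v₀ := (Finset.mem_erase.1 hy).1
  have hrw : insert v₀ ((τ.erase v₀).erase y) = τ.erase y := by
    rw [Finset.erase_right_comm, Finset.insert_erase
      (Finset.mem_erase.2 ⟨Ne.symm hyne, hv₀⟩)]
  rw [hrw]
  exact hfaces y hyτ hyne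

variable [Fintype X]

/-- **Key lemma**: for a `q`-simplex `σ` of diameter `≤ r` and any `x` in its lune,
the boundary of `⟨x σ⟩` is a boundary of the reduced complex. -/
theorem key_lemma {ψ : X → ℕ} (hinj : Function.Injective ψ) {q : ℕ} (hq : 1 ≤ q)
    {L : Finset X → Set X} (hL : IsLuneFun ψ q L) (r : ℝ) :
    ∀ σ : Finset X, σ.card = q + 1 → sdiam σ ≤ r → ∀ x ∈ lune ψ σ,
      bdry X (Finsupp.single (insert x σ) (1 : ZMod 2)) ∈
        Submodule.map (bdry X) (chainCard (RVRc q L r) (q + 2)) := by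
  intro σ₀
  refine WellFounded.induction (sLT_wf ψ) (C := fun σ => σ.card = q + 1 → sdiam σ ≤ r →
    ∀ x ∈ lune ψ σ, bdry X (Finsupp.single (insert x σ) (1 : ZMod 2)) ∈
      Submodule.map (bdry X) (chainCard (RVRc q L r) (q + 2))) σ₀ ?_
  clear σ₀
  intro σ IH hcard hdiam x hx
  obtain ⟨hLsub, hex, -⟩ := hL σ hcard
  obtain ⟨y, ⟨hyL, hconn⟩, -⟩ := hex x hx
  have hcard2 : 2 ≤ σ.card := by omega
  have hins : ∀ p ∈ lune ψ σ, sdiam (insert p σ) ≤ r :=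
    fun p hp => (sdiam_insert_le hcard2 hp).trans hdiam
  clear hx hex
  induction hconn using Relation.ReflTransGen.head_induction_on with
  | refl =>
    have hynotmem : y ∉ σ := lune_notMem (hLsub hyL)
    have hmem : insert y σ ∈ RVRc q L r :=
      Or.inr ⟨σ, y, hyL, hcard, hdiam, rfl,
        by rw [Finset.card_insert_of_notMem hynotmem, hcard], hins y (hLsub hyL)⟩
    exact Submodule.mem_map_of_mem (Submodule.subset_span
      ⟨insert y σ, hmem, by rw [Finset.card_insert_of_notMem hynotmem, hcard], rfl⟩)
  | head hadj htail ihc =>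
    rename_i a c
    obtain ⟨haL, hcL, hac, hadj2⟩ := hadj
    have ha : a ∉ σ := lune_notMem haL
    have hc : c ∉ σ := lune_notMem hcL
    -- the chain identity coming from ∂∂⟨a c σ⟩ = 0
    have hzero : bdry X (Finsupp.single (insert c σ) (1 : ZMod 2))
        + bdry X (Finsupp.single (insert a σ) (1 : ZMod 2))
        + ∑ z ∈ σ, bdry X (Finsupp.single (insert a (insert c (σ.erase z))) (1 : ZMod 2))
        = 0 := by
      have h1 := bdry_insert_insert ha hc hac
      calc bdry X (Finsupp.single (insert c σ) (1 : ZMod 2))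
            + bdry X (Finsupp.single (insert a σ) (1 : ZMod 2))
            + ∑ z ∈ σ, bdry X (Finsupp.single (insert a (insert c (σ.erase z)))
                (1 : ZMod 2))
          = bdry X (bdry X (Finsupp.single (insert a (insert c σ)) (1 : ZMod 2))) := by
            rw [h1, map_add, map_add, map_sum]
        _ = 0 := bdry_bdry _
    have hkey2 : bdry X (Finsupp.single (insert a σ) (1 : ZMod 2))
        = bdry X (Finsupp.single (insert c σ) (1 : ZMod 2))
          + ∑ z ∈ σ, bdry X (Finsupp.single (insert a (insert c (σ.erase z)))
              (1 : ZMod 2)) := by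
      have h' : bdry X (Finsupp.single (insert a σ) (1 : ZMod 2))
          + (bdry X (Finsupp.single (insert c σ) (1 : ZMod 2))
            + ∑ z ∈ σ, bdry X (Finsupp.single (insert a (insert c (σ.erase z)))
                (1 : ZMod 2))) = 0 := by
        rw [← hzero]; abel
      rw [← ch_neg_eq (bdry X (Finsupp.single (insert c σ) (1 : ZMod 2)) + _)]
      exact eq_neg_of_add_eq_zero_left h'
    rw [hkey2]
    refine Submodule.add_mem _ ihc (Submodule.sum_mem _ ?_)
    intro z hz
    -- the simplex μ = ⟨a c (σ \ z)⟩
    set μ := insert a (insert c (σ.erase z)) with hμ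
    have hcz : c ∉ σ.erase z := fun h => hc (Finset.mem_of_mem_erase h)
    have hacz : a ∉ insert c (σ.erase z) := by
      simp only [Finset.mem_insert]
      rintro (rfl | h)
      · exact hac rfl
      · exact ha (Finset.mem_of_mem_erase h)
    have hμcard : μ.card = q + 2 := by
      rw [hμ, Finset.card_insert_of_notMem hacz, Finset.card_insert_of_notMem hcz,
        Finset.card_erase_of_mem hz, hcard]
      omega
    have hμne : μ.Nonempty := ⟨a, Finset.mem_insert_self _ _⟩
    -- every facet of μ is < σ
    have hfaces : ∀ v ∈ μ, sLT ψ (μ.erase v) σ := by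
      intro v hv
      rw [hμ] at hv
      rcases Finset.mem_insert.1 hv with rfl | hv'
      · rw [hμ, Finset.erase_insert hacz]
        exact hcL z hz
      · rcases Finset.mem_insert.1 hv' with rfl | hw
        · have : μ.erase v = insert a (σ.erase z) := by
            rw [hμ, Finset.erase_insert_of_ne hac, Finset.erase_insert hcz]
          rw [this]
          exact haL z hz
        · have hwσ : v ∈ σ := Finset.mem_of_mem_erase hw
          have hva : a ≠ v := fun h => ha (h ▸ hwσ)
          have hvc : c ≠ v := fun h => hc (h ▸ hwσ)
          have : μ.erase v = insert a (insert c ((σ.erase z).erase v)) := by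
            rw [hμ, Finset.erase_insert_of_ne hva, Finset.erase_insert_of_ne hvc]
          rw [this]
          exact hadj2 z hz v hwσ (Ne.symm (Finset.mem_erase.1 hw).1)
    -- decompose μ by its maximal facet and apply the outer induction hypothesis
    obtain ⟨x', σ', hx'σ', hμeq, hσ'def, hx'lune, -⟩ := exists_maxface hinj μ hμne
    have hx'μ : x' ∈ μ := hμeq ▸ Finset.mem_insert_self _ _
    have hσ'LT : sLT ψ σ' σ := hσ'def ▸ hfaces x' hx'μ
    have hσ'card : σ'.card = q + 1 := by
      rw [hσ'def, Finset.card_erase_of_mem hx'μ, hμcard]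
      omega
    have hσ'diam : sdiam σ' ≤ r := (sdiam_le_of_sLT hσ'LT).trans hdiam
    have := IH σ' hσ'LT hσ'card hσ'diam x' hx'lune
    rwa [← hμeq] at this
end Aux2

section Aux3

variable {X : Type*} [MetricSpace X] [DecidableEq X]

theorem RVRc_subset_VRc (q : ℕ) (L : Finset X → Set X) (r : ℝ) :
    RVRc q L r ⊆ VRc X r := by
  rintro τ (⟨h1, h2, h3⟩ | ⟨σ, x, hx, h1, h2, h3, h4, h5⟩)
  · exact ⟨h1, h3⟩
  · subst h3
    exact ⟨Finset.insert_nonempty _ _, h5⟩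

theorem chainCard_q1_eq (q : ℕ) (L : Finset X → Set X) (r : ℝ) :
    chainCard (RVRc q L r) (q + 1) = chainCard (VRc X r) (q + 1) := by
  unfold chainCard
  congr 1
  ext f
  constructor
  · rintro ⟨σ, hσ, hc, rfl⟩
    exact ⟨σ, RVRc_subset_VRc q L r hσ, hc, rfl⟩
  · rintro ⟨σ, ⟨h1, h2⟩, hc, rfl⟩
    exact ⟨σ, Or.inl ⟨h1, le_of_eq hc, h2⟩, hc, rfl⟩

theorem bdries_eq [Fintype X] {ψ : X → ℕ} (hinj : Function.Injective ψ) {q : ℕ}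
    (hq : 1 ≤ q) {L : Finset X → Set X} (hL : IsLuneFun ψ q L) (r : ℝ) :
    Submodule.map (bdry X) (chainCard (RVRc q L r) (q + 2)) =
      Submodule.map (bdry X) (chainCard (VRc X r) (q + 2)) := by
  refine le_antisymm
    (Submodule.map_mono (chainCard_mono (RVRc_subset_VRc q L r) _)) ?_
  show Submodule.map (bdry X) (chainCard (VRc X r) (q + 2)) ≤ _
  unfold chainCard
  rw [Submodule.map_span, Submodule.span_le]
  rintro f ⟨g, ⟨τ, ⟨hτne, hτd⟩, hτc, rfl⟩, rfl⟩
  obtain ⟨x, σ, hxσ, hτeq, hσdef, hxl, -⟩ := exists_maxface hinj τ hτne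
  have hxτ : x ∈ τ := hτeq ▸ Finset.mem_insert_self _ _
  have hσc : σ.card = q + 1 := by
    rw [hσdef, Finset.card_erase_of_mem hxτ, hτc]
    omega
  have hσd : sdiam σ ≤ r := (sdiam_mono (hσdef ▸ Finset.erase_subset _ _)).trans hτd
  have h := key_lemma hinj hq hL r σ hσc hσd x hxl
  rw [hτeq]
  exact h

end Aux3

section Theta

variable {V : Type*} [DecidableEq V]

/-- The map on homology induced by inclusions of cycles and boundaries in one degree. -/
noncomputable def homolMap' (W W' : ℕ → Submodule (ZMod 2) (Ch V)) (k : ℕ)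
    (hc : cyclesOf W k ≤ cyclesOf W' k) (hb : bdriesOf W k ≤ bdriesOf W' k) :
    homolOf W k →ₗ[ZMod 2] homolOf W' k :=
  Submodule.mapQ _ _ (Submodule.inclusion hc) (by
    intro x hx
    simp only [Submodule.mem_comap, Submodule.subtype_apply, Submodule.coe_inclusion]
      at hx ⊢
    exact hb hx)

theorem homolMap'_mk (W W' : ℕ → Submodule (ZMod 2) (Ch V)) (k : ℕ)
    (hc : cyclesOf W k ≤ cyclesOf W' k) (hb : bdriesOf W k ≤ bdriesOf W' k)
    (z : cyclesOf W k) :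
    homolMap' W W' k hc hb (Submodule.Quotient.mk z) =
      Submodule.Quotient.mk (Submodule.inclusion hc z) :=
  Submodule.mapQ_apply _ _ _ _

theorem homolMap_mk (W W' : ℕ → Submodule (ZMod 2) (Ch V)) (h : ∀ k, W k ≤ W' k)
    (k : ℕ) (z : cyclesOf W k) :
    homolMap W W' h k (Submodule.Quotient.mk z) =
      Submodule.Quotient.mk (Submodule.inclusion (inf_le_inf (h k) le_rfl) z) :=
  Submodule.mapQ_apply _ _ _ _

theorem homol_ext {W W' : ℕ → Submodule (ZMod 2) (Ch V)} {k : ℕ}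
    {F G : homolOf W k →ₗ[ZMod 2] homolOf W' k}
    (h : ∀ z : cyclesOf W k, F (Submodule.Quotient.mk z) = G (Submodule.Quotient.mk z)) :
    F = G :=
  Submodule.linearMap_qext _ (LinearMap.ext h)

/-- The isomorphism on homology coming from equality of cycles and boundaries. -/
noncomputable def homolEquivOfEq (W W' : ℕ → Submodule (ZMod 2) (Ch V)) (k : ℕ)
    (hc : cyclesOf W k = cyclesOf W' k) (hb : bdriesOf W k = bdriesOf W' k) :
    homolOf W k ≃ₗ[ZMod 2] homolOf W' k :=
  LinearEquiv.ofLinear (homolMap' W W' k hc.le hb.le) (homolMap' W' W k hc.ge hb.ge)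
    (homol_ext fun z => by
      simp only [LinearMap.comp_apply, LinearMap.id_apply, homolMap'_mk]
      exact congrArg _ (Subtype.ext rfl))
    (homol_ext fun z => by
      simp only [LinearMap.comp_apply, LinearMap.id_apply, homolMap'_mk]
      exact congrArg _ (Subtype.ext rfl))

theorem homolEquivOfEq_mk (W W' : ℕ → Submodule (ZMod 2) (Ch V)) (k : ℕ)
    (hc : cyclesOf W k = cyclesOf W' k) (hb : bdriesOf W k = bdriesOf W' k)
    (z : cyclesOf W k) :
    homolEquivOfEq W W' k hc hb (Submodule.Quotient.mk z) =
      Submodule.Quotient.mk (Submodule.inclusion hc.le z) := by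
  unfold homolEquivOfEq
  rw [LinearEquiv.ofLinear_apply, homolMap'_mk]

end Theta

/-- For a finite metric space `X` and `q ≥ 1`, with a fixed degree-`q`
lune function `L`, there is a family of isomorphisms
`θ_r : H_q(RVR_r^q(X)) → H_q(VR_r(X))` commuting with the maps induced by the
inclusions `RVR_{r₁}^q(X) ⊆ RVR_{r₂}^q(X)` and `VR_{r₁}(X) ⊆ VR_{r₂}(X)` for all
`0 ≤ r₁ < r₂`. -/
theorem rvr_vr_persistent_iso (X : Type*) [MetricSpace X] [Fintype X] [DecidableEq X]
    (ψ : X → ℕ) (hinj : Function.Injective ψ)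
    (hrange : ∀ x, ψ x ∈ Finset.Icc 1 (Fintype.card X))
    (q : ℕ) (hq : 1 ≤ q) (L : Finset X → Set X) (hL : IsLuneFun ψ q L) :
    ∃ θ : ∀ r : ℝ, homolOf (chainCard (RVRc q L r)) (q + 1) ≃ₗ[ZMod 2]
        homolOf (chainCard (VRc X r)) (q + 1),
      ∀ r₁ r₂ : ℝ, 0 ≤ r₁ → ∀ h12 : r₁ < r₂,
        LinearMap.comp
            (homolMap (chainCard (VRc X r₁)) (chainCard (VRc X r₂))
              (fun k => chainCard_mono (VRc_mono X h12.le) k) (q + 1))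
            (θ r₁).toLinearMap =
          LinearMap.comp (θ r₂).toLinearMap
            (homolMap (chainCard (RVRc q L r₁)) (chainCard (RVRc q L r₂))
              (fun k => chainCard_mono (RVRc_mono q L h12.le) k) (q + 1)) := by
  have hcyc : ∀ r : ℝ, cyclesOf (chainCard (RVRc q L r)) (q + 1)
      = cyclesOf (chainCard (VRc X r)) (q + 1) := by
    intro r
    unfold cyclesOf
    rw [chainCard_q1_eq]
  have hbd : ∀ r : ℝ, bdriesOf (chainCard (RVRc q L r)) (q + 1)
      = bdriesOf (chainCard (VRc X r)) (q + 1) := by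
    intro r
    unfold bdriesOf
    exact bdries_eq hinj hq hL r
  refine ⟨fun r => homolEquivOfEq _ _ (q + 1) (hcyc r) (hbd r), ?_⟩
  intro r₁ r₂ h0 h12
  apply homol_ext
  intro z
  simp only [LinearMap.comp_apply, LinearEquiv.coe_coe, LinearEquiv.coe_toLinearMap,
    homolEquivOfEq_mk, homolMap_mk]
  exact congrArg _ (Subtype.ext rfl)
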